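/- Let x be an n×n matrix with 0 ≤ x_{ij} ≤ 1 for all i,j and Σ_{i,j} x_{ij} ≤ n. Then the vector Tx = (Σ_{k=1}^n x_{k,π(k)} : π ∈ S_n) is Hardy–Littlewood majorized by T(I_n). -/

import Mathlib

open scoped Classical

noncomputable def sumLargest {ι : Type*} [Fintype ι] (v : ι → ℝ) (m : ℕ) : ℝ :=
  sSup ((fun I : Finset ι => ∑ i ∈ I, v i) '' {I | I.card = m})

def Maj {ι : Type*} [Fintype ι] (a b : ι → ℝ) : Prop :=
  ∀ m : ℕ, 1 ≤ m → m ≤ Fintype.card ι → sumLargest a m ≤ sumLargest b m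

/-- The vector `Tx = (∑ k, x_{k, π k})_{π ∈ S_n}`. -/
def T (n : ℕ) (x : Fin n → Fin n → ℝ) : Equiv.Perm (Fin n) → ℝ :=
  fun π => ∑ k, x k (π k)

/-!
Summing `Tx` over a set `S` of `m` permutations gives `∑ₑ cₑ xₑ`, where `cₑ` counts the
permutations of `S` through the cell `e`. Under the constraints on `x` this is at most the sum of
the `n` largest `cₑ`, i.e. the number of incidences between `S` and a set `C` of `n` cells. By a
threshold argument it then suffices that `∑_π (hits C π - s)₊ ≤ ∑_σ (fix σ - s)₊` for every `s`.
Moving a cell of `C` from a row containing another cell to an empty row `i'` preserves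
`hits C π + hits C (π * swap i i')` but pushes the two terms apart, so by convexity the excess can
only grow; the same holds for columns after transposing. Repeating the moves turns `C` into the
graph of a permutation, whose excess is that of the diagonal.
-/

open Finset

section Threshold

variable {ι : Type*} [Fintype ι]

theorem exists_card_eq_threshold (f : ι → ℕ) {m : ℕ} (hm : m ≤ Fintype.card ι) :
    ∃ I : Finset ι, #I = m ∧ ∃ θ, (∀ i ∈ I, θ ≤ f i) ∧ ∀ i ∉ I, f i ≤ θ := by
  induction m with
  | zero => exact ⟨∅, rfl, univ.sup f, by simp, fun i _ => le_sup (mem_univ i)⟩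
  | succ m ih =>
    obtain ⟨I, hI, θ, hθI, hIθ⟩ := ih (by omega)
    have hne : (univ \ I).Nonempty := by
      rw [← card_pos, card_sdiff_of_subset (subset_univ I), card_univ]
      omega
    obtain ⟨b, hb, hbmax⟩ := exists_max_image (univ \ I) f hne
    have hbI : b ∉ I := (mem_sdiff.mp hb).2
    refine ⟨insert b I, by rw [card_insert_of_notMem hbI, hI], f b, ?_, ?_⟩
    · intro i hi
      rcases mem_insert.mp hi with rfl | hi
      · exact le_rfl
      · exact (hIθ b hbI).trans (hθI i hi)
    · intro i hi
      exact hbmax i (mem_sdiff.mpr ⟨mem_univ i, fun h => hi (mem_insert_of_mem h)⟩)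

theorem sum_le_sum_of_sum_tsub_le {f g : ι → ℕ} (hfg : ∀ s, ∑ i, (f i - s) ≤ ∑ i, (g i - s))
    {S I : Finset ι} (hSI : #S ≤ #I) {θ : ℕ} (hθI : ∀ i ∈ I, θ ≤ g i)
    (hIθ : ∀ i ∉ I, g i ≤ θ) :
    ∑ i ∈ S, f i ≤ ∑ i ∈ I, g i :=
  calc ∑ i ∈ S, f i ≤ ∑ i ∈ S, (θ + (f i - θ)) := sum_le_sum fun i _ => by omega
    _ = #S * θ + ∑ i ∈ S, (f i - θ) := by rw [sum_add_distrib, sum_const, smul_eq_mul]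
    _ ≤ #I * θ + ∑ i, (g i - θ) := by
        gcongr
        exact (sum_le_sum_of_subset (subset_univ S)).trans (hfg θ)
    _ = #I * θ + ∑ i ∈ I, (g i - θ) := by
        rw [sum_subset (subset_univ I) fun i _ hi => by simp [hIθ i hi]]
    _ = ∑ i ∈ I, g i := by
        rw [← smul_eq_mul, ← sum_const, ← sum_add_distrib]
        exact sum_congr rfl fun i hi => by have := hθI i hi; omega

theorem sum_mul_le_sum_of_threshold {c x : ι → ℝ} {I : Finset ι} {θ : ℝ} (hθ : 0 ≤ θ)
    (hθI : ∀ i ∈ I, θ ≤ c i) (hIθ : ∀ i ∉ I, c i ≤ θ) (hx0 : ∀ i, 0 ≤ x i)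
    (hx1 : ∀ i, x i ≤ 1) (hx : ∑ i, x i ≤ #I) :
    ∑ i, c i * x i ≤ ∑ i ∈ I, c i := by
  have hpoint : ∀ i, (c i - θ) * x i ≤ if i ∈ I then c i - θ else 0 := by
    intro i
    split_ifs with hi
    · exact mul_le_of_le_one_right (sub_nonneg.mpr (hθI i hi)) (hx1 i)
    · exact mul_nonpos_of_nonpos_of_nonneg (sub_nonpos.mpr (hIθ i hi)) (hx0 i)
  calc ∑ i, c i * x i = ∑ i, (c i - θ) * x i + θ * ∑ i, x i := by
        rw [mul_sum, ← sum_add_distrib]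
        exact sum_congr rfl fun i _ => by ring
    _ ≤ ∑ i ∈ I, (c i - θ) + θ * #I := by
        gcongr
        exact (sum_le_sum fun i _ => hpoint i).trans_eq (by rw [sum_ite_mem, univ_inter])
    _ = ∑ i ∈ I, c i := by rw [sum_sub_distrib, sum_const, nsmul_eq_mul]; ring

theorem le_sumLargest (v : ι → ℝ) (I : Finset ι) :
    ∑ i ∈ I, v i ≤ sumLargest v #I :=
  le_csSup ((Set.toFinite _).image _).bddAbove ⟨I, rfl, rfl⟩

theorem exists_sum_eq_sumLargest (v : ι → ℝ) {m : ℕ}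
    (hm : m ≤ Fintype.card ι) : ∃ I : Finset ι, #I = m ∧ ∑ i ∈ I, v i = sumLargest v m := by
  obtain ⟨I, -, hI⟩ := exists_subset_card_eq (show m ≤ #(univ : Finset ι) by rwa [card_univ])
  obtain ⟨J, hJ, hJv⟩ := Set.Nonempty.csSup_mem (⟨_, I, hI, rfl⟩ :
    ((fun I : Finset ι => ∑ i ∈ I, v i) '' {I | #I = m}).Nonempty) ((Set.toFinite _).image _)
  exact ⟨J, hJ, hJv⟩

end Threshold

section Hits

variable {n : ℕ}

def hits (C : Finset (Fin n × Fin n)) (π : Equiv.Perm (Fin n)) : ℕ :=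
  ∑ k, if (k, π k) ∈ C then 1 else 0

def excess (C : Finset (Fin n × Fin n)) (s : ℕ) : ℕ :=
  ∑ π, (hits C π - s)

theorem T_indicator_eq_hits (C : Finset (Fin n × Fin n)) (π : Equiv.Perm (Fin n)) :
    T n (fun i j => if (i, j) ∈ C then 1 else 0) π = hits C π := by
  simp [T, hits]

theorem sum_T_eq_sum_card_mul (x : Fin n → Fin n → ℝ) (S : Finset (Equiv.Perm (Fin n))) :
    ∑ π ∈ S, T n x π = ∑ e : Fin n × Fin n, (#{π ∈ S | π e.1 = e.2} : ℝ) * x e.1 e.2 := by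
  simp only [T]
  rw [sum_comm, Fintype.sum_prod_type]
  refine sum_congr rfl fun k _ => ?_
  rw [← sum_fiberwise S (fun π => π k)]
  refine sum_congr rfl fun j _ => ?_
  rw [sum_congr rfl fun π hπ => by rw [(mem_filter.mp hπ).2], sum_const, nsmul_eq_mul]

theorem hits_image_swap (C : Finset (Fin n × Fin n)) (π : Equiv.Perm (Fin n)) :
    hits (C.image Prod.swap) π⁻¹ = hits C π := by
  unfold hits
  rw [← Equiv.sum_comp π]
  simp

theorem excess_image_swap (C : Finset (Fin n × Fin n)) (s : ℕ) :
    excess (C.image Prod.swap) s = excess C s := by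
  unfold excess
  rw [← Equiv.sum_comp (Equiv.inv _)]
  simp [hits_image_swap]

theorem hits_eq_sum_erase_add_add {i i' : Fin n} (h : i ≠ i') (C : Finset (Fin n × Fin n))
    (π : Equiv.Perm (Fin n)) :
    hits C π = (∑ k ∈ (univ.erase i).erase i', if (k, π k) ∈ C then 1 else 0)
      + (if (i, π i) ∈ C then 1 else 0) + (if (i', π i') ∈ C then 1 else 0) := by
  unfold hits
  rw [← add_sum_erase univ _ (mem_univ i),
    ← add_sum_erase _ _ (mem_erase.mpr ⟨h.symm, mem_univ i'⟩)]
  ring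

theorem hits_tsub_add_hits_tsub_le_moveCell {C : Finset (Fin n × Fin n)} {i i' b : Fin n}
    (hib : (i, b) ∈ C) (hi' : ∀ y, (i', y) ∉ C) (π : Equiv.Perm (Fin n)) (s : ℕ) :
    (hits C π - s) + (hits C (π * Equiv.swap i i') - s)
      ≤ (hits (insert (i', b) (C.erase (i, b))) π - s)
        + (hits (insert (i', b) (C.erase (i, b))) (π * Equiv.swap i i') - s) := by
  have hii' : i ≠ i' := by rintro rfl; exact hi' b hib
  set C' := insert (i', b) (C.erase (i, b))
  set ρ := π * Equiv.swap i i'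
  have hρ : ∀ k ∈ (univ.erase i).erase i', ρ k = π k := fun k hk => by
    simp only [mem_erase] at hk
    simp [ρ, Equiv.swap_apply_of_ne_of_ne hk.2.1 hk.1]
  have hC' : ∀ k ∈ (univ.erase i).erase i', ∀ y, (k, y) ∈ C' ↔ (k, y) ∈ C := fun k hk y => by
    simp only [mem_erase] at hk
    simp [C', hk.1, hk.2.1]
  set w := ∑ k ∈ (univ.erase i).erase i', if (k, π k) ∈ C then 1 else 0
  have hwρ : (∑ k ∈ (univ.erase i).erase i', if (k, ρ k) ∈ C then 1 else 0) = w :=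
    sum_congr rfl fun k hk => by rw [hρ k hk]
  have hw' : ∀ σ : Equiv.Perm (Fin n),
      (∑ k ∈ (univ.erase i).erase i', if (k, σ k) ∈ C' then 1 else 0)
      = ∑ k ∈ (univ.erase i).erase i', if (k, σ k) ∈ C then 1 else 0 :=
    fun σ => sum_congr rfl fun k hk => if_congr (hC' k hk _) rfl rfl
  have hrow : ∀ y, (if (i, y) ∈ C' then 1 else 0) + (if y = b then 1 else 0)
      = if (i, y) ∈ C then 1 else 0 := fun y => by
    by_cases hy : y = b
    · subst hy; simp [C', hib, hii']
    · simp [C', hy]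
  have hrow' : ∀ y, (i', y) ∈ C' ↔ y = b := fun y => by simp [C', hi' y]
  simp only [hits_eq_sum_erase_add_add hii' _ π, hits_eq_sum_erase_add_add hii' _ ρ, hw', hwρ,
    hrow', hi', if_false, show ρ i = π i' by simp [ρ], show ρ i' = π i by simp [ρ]]
  have h1 := hrow (π i)
  have h2 := hrow (π i')
  -- the two pairs have equal sums and the new one is more spread out: convexity of `t ↦ t - s`
  split_ifs at h1 h2 ⊢ <;> omega

theorem excess_le_excess_moveCell {C : Finset (Fin n × Fin n)} {i i' b : Fin n}
    (hib : (i, b) ∈ C) (hi' : ∀ y, (i', y) ∉ C) (s : ℕ) :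
    excess C s ≤ excess (insert (i', b) (C.erase (i, b))) s := by
  have hshift : ∀ X : Finset (Fin n × Fin n),
      ∑ π, (hits X (π * Equiv.swap i i') - s) = excess X s :=
    fun X => Equiv.sum_comp (Equiv.mulRight _) (fun π => hits X π - s)
  have h := sum_le_sum fun π (_ : π ∈ univ) => hits_tsub_add_hits_tsub_le_moveCell hib hi' π s
  rw [sum_add_distrib, sum_add_distrib, hshift, hshift] at h
  unfold excess at h ⊢
  omega

theorem excess_eq_excess_diag_of_mem_iff {C : Finset (Fin n × Fin n)} (Q : Equiv.Perm (Fin n))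
    (hQ : ∀ k j, (k, j) ∈ C ↔ Q k = j) (s : ℕ) :
    excess C s = excess (univ : Finset (Fin n)).diag s := by
  unfold excess
  rw [← Equiv.sum_comp (Equiv.mulLeft Q)]
  refine sum_congr rfl fun σ _ => ?_
  unfold hits
  congr 1
  refine sum_congr rfl fun k _ => ?_
  simp [hQ, mem_diag]

theorem exists_perm_mem_iff {C : Finset (Fin n × Fin n)} (hC : #C = n)
    (h1 : C.image Prod.fst = univ) (h2 : C.image Prod.snd = univ) :
    ∃ Q : Equiv.Perm (Fin n), ∀ k j, (k, j) ∈ C ↔ Q k = j := by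
  have inj1 : Set.InjOn Prod.fst (C : Set (Fin n × Fin n)) :=
    card_image_iff.mp (show #(C.image Prod.fst) = #C by rw [h1, card_univ, Fintype.card_fin, hC])
  have inj2 : Set.InjOn Prod.snd (C : Set (Fin n × Fin n)) :=
    card_image_iff.mp (show #(C.image Prod.snd) = #C by rw [h2, card_univ, Fintype.card_fin, hC])
  have hrow : ∀ k, ∃ j, (k, j) ∈ C := fun k => by
    obtain ⟨e, he, rfl⟩ := mem_image.mp (h1 ▸ mem_univ k)
    exact ⟨e.2, he⟩
  choose q hq using hrow
  have hinj : Function.Injective q := fun k l h => (Prod.ext_iff.mp (inj2 (hq k) (hq l) h)).1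
  refine ⟨Equiv.ofBijective q (Finite.injective_iff_bijective.mp hinj), fun k j => ?_⟩
  exact ⟨fun h => (Prod.ext_iff.mp (inj1 (hq k) h rfl)).2, by rintro rfl; exact hq k⟩

theorem exists_excess_le_of_image_fst_ne_univ {C : Finset (Fin n × Fin n)} (hC : #C = n)
    (h : C.image Prod.fst ≠ univ) (s : ℕ) :
    ∃ C' : Finset (Fin n × Fin n), #C' = n ∧
      #(C.image Prod.fst) + #(C.image Prod.snd) < #(C'.image Prod.fst) + #(C'.image Prod.snd) ∧
      excess C s ≤ excess C' s := by
  obtain ⟨i', hi'⟩ : ∃ i', i' ∉ C.image Prod.fst := by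
    by_contra! h'
    exact h (eq_univ_of_forall h')
  have hlt : #(C.image Prod.fst) < #C := by
    simpa [hC] using (card_lt_iff_ne_univ _).mpr h
  obtain ⟨⟨i, b⟩, hx, y, hy, hxy, hfst⟩ :=
    exists_ne_map_eq_of_card_lt_of_maps_to hlt fun e he => mem_image_of_mem Prod.fst he
  have hrow : ∀ z, (i', z) ∉ C := fun z hz => hi' (mem_image_of_mem Prod.fst hz)
  have himage : ∀ f : Fin n × Fin n → Fin n,
      insert (f (i, b)) ((C.erase (i, b)).image f) = C.image f := fun f => by
    rw [← image_insert, insert_erase hx]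
  have hfst' : (C.erase (i, b)).image Prod.fst = C.image Prod.fst := by
    rw [← himage Prod.fst, insert_eq_of_mem]
    exact hfst ▸ mem_image_of_mem Prod.fst (mem_erase.mpr ⟨hxy.symm, hy⟩)
  refine ⟨insert (i', b) (C.erase (i, b)), ?_, ?_, excess_le_excess_moveCell hx hrow s⟩
  · rw [card_insert_of_notMem fun h => hrow b (mem_of_mem_erase h), card_erase_of_mem hx]
    have := card_pos.mpr ⟨_, hx⟩
    omega
  · rw [image_insert, image_insert, hfst', himage Prod.snd, card_insert_of_notMem hi']
    omega

theorem excess_le_excess_diag (s : ℕ) {C : Finset (Fin n × Fin n)} (hC : #C = n) :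
    excess C s ≤ excess (univ : Finset (Fin n)).diag s := by
  induction hm : 2 * n - (#(C.image Prod.fst) + #(C.image Prod.snd))
    using Nat.strong_induction_on generalizing C with
  | _ m ih =>
  have hcover : ∀ D : Finset (Fin n × Fin n),
      #(D.image Prod.fst) + #(D.image Prod.snd) ≤ 2 * n := fun D => by
    have h1 := card_le_univ (D.image Prod.fst)
    have h2 := card_le_univ (D.image Prod.snd)
    simp only [Fintype.card_fin] at h1 h2
    omega
  have hrows : ∀ D : Finset (Fin n × Fin n), #D = n → D.image Prod.fst ≠ univ →
      #(D.image Prod.fst) + #(D.image Prod.snd) = #(C.image Prod.fst) + #(C.image Prod.snd) →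
      excess D s ≤ excess (univ : Finset (Fin n)).diag s := by
    intro D hD hne hcov
    obtain ⟨D', hD', hlt, hle⟩ := exists_excess_le_of_image_fst_ne_univ hD hne s
    exact hle.trans (ih _ (by have := hcover D'; omega) hD' rfl)
  by_cases h1 : C.image Prod.fst = univ
  · by_cases h2 : C.image Prod.snd = univ
    · obtain ⟨Q, hQ⟩ := exists_perm_mem_iff hC h1 h2
      exact (excess_eq_excess_diag_of_mem_iff Q hQ s).le
    · have hfst : (C.image Prod.swap).image Prod.fst = C.image Prod.snd := by
        rw [image_image]; rfl
      have hsnd : (C.image Prod.swap).image Prod.snd = C.image Prod.fst := by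
        rw [image_image]; rfl
      rw [← excess_image_swap]
      exact hrows _ (by rw [card_image_of_injective _ Prod.swap_injective, hC]) (hfst ▸ h2)
        (by rw [hfst, hsnd, add_comm])
  · exact hrows C hC h1 rfl

end Hits

theorem lemma4 (n : ℕ) (x : Fin n → Fin n → ℝ)
    (h0 : ∀ i j, 0 ≤ x i j) (h1 : ∀ i j, x i j ≤ 1)
    (hsum : ∑ i, ∑ j, x i j ≤ (n : ℝ)) :
    Maj (T n x) (T n (fun i j => if i = j then (1 : ℝ) else 0)) := by
  intro m _ hm
  obtain ⟨S, rfl, hS⟩ := exists_sum_eq_sumLargest (T n x) hm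
  set c : Fin n × Fin n → ℕ := fun e => #{π ∈ S | π e.1 = e.2}
  obtain ⟨C, hC, θ, hθC, hCθ⟩ := exists_card_eq_threshold c (m := n)
    (by simpa using Nat.le_mul_self n)
  obtain ⟨I, hI, κ, hκI, hIκ⟩ := exists_card_eq_threshold (hits (univ : Finset (Fin n)).diag) hm
  have hdiag : (fun i j => if i = j then (1 : ℝ) else 0)
      = fun i j => if (i, j) ∈ (univ : Finset (Fin n)).diag then 1 else 0 := by
    simp [mem_diag]
  rw [← hS, hdiag, ← hI]
  calc ∑ π ∈ S, T n x π = ∑ e, (c e : ℝ) * x e.1 e.2 := sum_T_eq_sum_card_mul x S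
    _ ≤ ∑ e ∈ C, (c e : ℝ) :=
        sum_mul_le_sum_of_threshold θ.cast_nonneg (fun e he => by exact_mod_cast hθC e he)
          (fun e he => by exact_mod_cast hCθ e he) (fun e => h0 _ _) (fun e => h1 _ _)
          (by rwa [hC, Fintype.sum_prod_type'])
    _ = ∑ π ∈ S, (hits C π : ℝ) := by
        simp_rw [← T_indicator_eq_hits, sum_T_eq_sum_card_mul, mul_ite, mul_one, mul_zero,
          sum_ite_mem, univ_inter, c]
    _ ≤ ∑ σ ∈ I, (hits (univ : Finset (Fin n)).diag σ : ℝ) := by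
        exact_mod_cast
          sum_le_sum_of_sum_tsub_le (fun s => excess_le_excess_diag s hC) hI.ge hκI hIκ
    _ = ∑ σ ∈ I, T n _ σ := by simp_rw [T_indicator_eq_hits]
    _ ≤ sumLargest _ #I := le_sumLargest _ I
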